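/- arXiv:1112.0118 — 4 statements merged into one kernel-verified Lean document; each statement's English description precedes it below -/
import Mathlib

section
/- For every v ∈ 𝔡_ξ, every w ∈ 𝔡 and every integer M ≥ 1, one has A_v(M) · A_w(M) = A_{ρ(v,w)}(M). -/
open scoped BigOperators

noncomputable section

attribute [local instance 10] Classical.propDecidable

/-- The `q`-integer `[n] = (1 - q^n)/(1 - q)`. -/
def qint (q : ℝ) (n : ℕ) : ℝ := (1 - q ^ n) / (1 - q)

/-- `I(r,n)`: multi-indices of positive integers of depth `r` and weight `n`. -/
def Ifin (r n : ℕ) : Finset (Fin r → ℕ) :=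
  (Fintype.piFinset fun _ : Fin r => Finset.Icc 1 n).filter fun c => (∑ i, c i) = n

/-- `I₀(r,n)`: admissible multi-indices (first entry at least 2). -/
def I0fin (r n : ℕ) : Finset (Fin r → ℕ) :=
  (Ifin r n).filter fun c => ∀ h : 0 < r, 2 ≤ c ⟨0, h⟩

/-- The `q`-analogue of the multiple zeta value,
`ζ_q(α) = Σ_{m_1 > ... > m_r > 0} Π_j q^{(α_j - 1) m_j}/[m_j]^{α_j}`. -/
def zetaQ (q : ℝ) {r : ℕ} (α : Fin r → ℕ) : ℝ :=
  ∑' m : {m : Fin r → ℕ // (∀ i j : Fin r, i < j → m j < m i) ∧ ∀ i, 0 < m i},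
    ∏ j, q ^ ((α j - 1) * m.1 j) / qint q (m.1 j) ^ α j

/-- `K_{b,n}(M) = Σ_{α ∈ I₀(b,n)} Σ_{m_1 > ... > m_{b-1} > m_b = M} Π_j q^{(α_j-1)m_j}/[m_j]^{α_j}`. -/
def Kfun (q : ℝ) (b n M : ℕ) : ℝ :=
  ∑ α ∈ I0fin b n,
    ∑' m : {m : Fin b → ℕ //
        (∀ i j : Fin b, i < j → m j < m i) ∧
          ∀ h : 0 < b, m ⟨b - 1, Nat.sub_lt h Nat.one_pos⟩ = M},
      ∏ j, q ^ ((α j - 1) * m.1 j) / qint q (m.1 j) ^ α j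

/-- `f_ℓ(N,M) = Σ_{N = k_1 > k_2 > ... > k_ℓ > M} (q^{k_1-M}/[k_1-M]) Π_{j=2}^{ℓ} 1/[k_j-M]`. -/
def fS (q : ℝ) (l N M : ℕ) : ℝ :=
  ∑ k ∈ (Fintype.piFinset fun _ : Fin l => Finset.Ioc M N).filter
      (fun k => (∀ i j : Fin l, i < j → k j < k i) ∧ ∀ h : 0 < l, k ⟨0, h⟩ = N),
    ∏ j : Fin l, (if (j : ℕ) = 0 then q ^ (k j - M) else 1) / qint q (k j - M)

/-- `g_{ℓ,β}(M) = Σ_{M = m_1 ≥ m_2 ≥ ... ≥ m_ℓ ≥ 1} (q^{(β-1)m_1}/[m_1]^β) Π_{j=2}^{ℓ} q^{m_j}/[m_j]`. -/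
def gS (q : ℝ) (l β M : ℕ) : ℝ :=
  ∑ m ∈ (Fintype.piFinset fun _ : Fin l => Finset.Icc 1 M).filter
      (fun m => (∀ i j : Fin l, i ≤ j → m j ≤ m i) ∧ ∀ h : 0 < l, m ⟨0, h⟩ = M),
    ∏ j : Fin l, if (j : ℕ) = 0 then q ^ ((β - 1) * m j) / qint q (m j) ^ β
      else q ^ m j / qint q (m j)

/-- `h_{r,ℓ}(N_1,...,N_r,M) = Σ_{c ∈ I(r,ℓ)} (Π_{j=1}^{r-1} f_{c_j}(N_j,N_{j+1})) f_{c_r}(N_r,M)`. -/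
def hS (q : ℝ) (r l : ℕ) (N : Fin r → ℕ) (M : ℕ) : ℝ :=
  ∑ c ∈ Ifin r l,
    ∏ j : Fin r, fS q (c j) (N j) (if h : (j : ℕ) + 1 < r then N ⟨(j : ℕ) + 1, h⟩ else M)

/-- `p(n_1,...,n_s;m) = (q^{n_1-m}/[n_1-m]) Π_{j=2}^{s} 1/[n_j-m]`, with `p(∅;m) = 1`. -/
def pS (q : ℝ) {s : ℕ} (n : Fin s → ℕ) (m : ℕ) : ℝ :=
  ∏ j : Fin s, (if (j : ℕ) = 0 then q ^ (n j - m) else 1) / qint q (n j - m)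

/-! ### The algebras 𝔡, 𝔡_ξ and 𝔡₁ -/

/-- The alphabet `S = {z_k}_{k ≥ 1} ∪ {ξ_k}_{k ≥ 1}`: `Sum.inl k = z_k`, `Sum.inr k = ξ_k`. -/
abbrev Letter : Type := ℕ+ ⊕ ℕ+

/-- The noncommutative polynomial algebra 𝔡 over ℤ freely generated by `S`. -/
abbrev Dfree : Type := MonoidAlgebra ℤ (FreeMonoid Letter)

/-- The subalgebra 𝔡_ξ generated by the `ξ_k`, realized as a free algebra on `{ξ_k}_{k≥1}`. -/
abbrev DXi : Type := MonoidAlgebra ℤ (FreeMonoid ℕ+)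

/-- The subalgebra 𝔡₁ generated by `z_1` and `ξ_1`, realized as a free algebra on two letters
(`false = z_1`, `true = ξ_1`). -/
abbrev DOne : Type := MonoidAlgebra ℤ (FreeMonoid Bool)

/-- The generator `z_k` of 𝔡. -/
def zL (k : ℕ+) : Dfree := MonoidAlgebra.single (FreeMonoid.of (Sum.inl k)) 1

/-- The generator `ξ_k` of 𝔡. -/
def xiL (k : ℕ+) : Dfree := MonoidAlgebra.single (FreeMonoid.of (Sum.inr k)) 1

/-- The generator `ξ_k` of 𝔡_ξ. -/
def xiX (k : ℕ+) : DXi := MonoidAlgebra.single (FreeMonoid.of k) 1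

/-- The generator `z_1` of 𝔡₁. -/
def zO : DOne := MonoidAlgebra.single (FreeMonoid.of false) 1

/-- The generator `ξ_1` of 𝔡₁. -/
def xiO : DOne := MonoidAlgebra.single (FreeMonoid.of true) 1

/-- `z_k` for a natural number index `k ≥ 1` (junk value `0` for `k = 0`). -/
def zOf (k : ℕ) : Dfree := if h : 0 < k then zL ⟨k, h⟩ else 0

/-- `ξ_k ∈ 𝔡_ξ` for a natural number index `k ≥ 1` (junk value `0` for `k = 0`). -/
def xiOf (k : ℕ) : DXi := if h : 0 < k then xiX ⟨k, h⟩ else 0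

/-- The canonical embedding `𝔡_ξ ↪ 𝔡`. -/
def toD (v : DXi) : Dfree := MonoidAlgebra.ofCoeff (Finsupp.mapDomain (FreeMonoid.map Sum.inr) v.coeff)

/-- The canonical embedding `𝔡₁ ↪ 𝔡` (`false ↦ z_1`, `true ↦ ξ_1`). -/
def toD1 (w : DOne) : Dfree :=
  MonoidAlgebra.ofCoeff (Finsupp.mapDomain (FreeMonoid.map fun b => if b then Sum.inr 1 else Sum.inl 1) w.coeff)

/-- `J_{z_k}(m) = q^{(k-1)m}/[m]^k` and `J_{ξ_k}(m) = q^{km}/[m]^k`. -/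
def Jlet (q : ℝ) : Letter → ℕ → ℝ
  | Sum.inl k, m => q ^ (((k : ℕ) - 1) * m) / qint q m ^ (k : ℕ)
  | Sum.inr k, m => q ^ ((k : ℕ) * m) / qint q m ^ (k : ℕ)

/-- `A_w(M) = Σ_{M > m_1 > ... > m_r > 0} J_{u_1}(m_1) ⋯ J_{u_r}(m_r)` for a word `w = u_1 ⋯ u_r`. -/
def AW (q : ℝ) (w : List Letter) (M : ℕ) : ℝ :=
  ∑ m ∈ (Fintype.piFinset fun _ : Fin w.length => Finset.Ioo 0 M).filter
      (fun m => ∀ i j, i < j → m j < m i),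
    ∏ j, Jlet q (w.get j) (m j)

/-- `A*_w(M) = Σ_{M > m_1 ≥ ... ≥ m_r ≥ 1} J_{u_1}(m_1) ⋯ J_{u_r}(m_r)` for a word `w = u_1 ⋯ u_r`. -/
def AstarW (q : ℝ) (w : List Letter) (M : ℕ) : ℝ :=
  ∑ m ∈ (Fintype.piFinset fun _ : Fin w.length => Finset.Ioo 0 M).filter
      (fun m => ∀ i j, i ≤ j → m j ≤ m i),
    ∏ j, Jlet q (w.get j) (m j)

/-- The ℤ-linear extension `A(M) : 𝔡 → ℝ`. -/
def Amap (q : ℝ) (x : Dfree) (M : ℕ) : ℝ :=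
  Finsupp.sum x.coeff fun w a => (a : ℝ) * AW q (FreeMonoid.toList w) M

/-- The ℤ-linear extension `A*(M) : 𝔡 → ℝ`. -/
def Astarmap (q : ℝ) (x : Dfree) (M : ℕ) : ℝ :=
  Finsupp.sum x.coeff fun w a => (a : ℝ) * AstarW q (FreeMonoid.toList w) M

/-- The map `ρ` on words:  `ρ(1,w) = w`, `ρ(v,1) = v`,
`ρ(ξ_k v, z_ℓ w) = ξ_k ρ(v, z_ℓ w) + z_ℓ ρ(ξ_k v, w) + z_{k+ℓ} ρ(v,w)`, and
`ρ(ξ_k v, ξ_ℓ w) = ξ_k ρ(v, ξ_ℓ w) + ξ_ℓ ρ(ξ_k v, w) + ξ_{k+ℓ} ρ(v,w)`. -/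
def rhoW : List ℕ+ → List Letter → Dfree
  | [], w => MonoidAlgebra.single (FreeMonoid.ofList w) 1
  | k :: v, [] => MonoidAlgebra.single (FreeMonoid.ofList ((k :: v).map Sum.inr)) 1
  | k :: v, Sum.inl l :: w =>
      xiL k * rhoW v (Sum.inl l :: w) + zL l * rhoW (k :: v) w + zL (k + l) * rhoW v w
  | k :: v, Sum.inr l :: w =>
      xiL k * rhoW v (Sum.inr l :: w) + xiL l * rhoW (k :: v) w + xiL (k + l) * rhoW v w
  termination_by v w => v.length + w.length

/-- The ℤ-bilinear map `ρ : 𝔡_ξ × 𝔡 → 𝔡`. -/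
def rho (v : DXi) (x : Dfree) : Dfree :=
  Finsupp.sum v.coeff fun vw a =>
    Finsupp.sum x.coeff fun xw b => (a * b) • rhoW (FreeMonoid.toList vw) (FreeMonoid.toList xw)

/-- `ξ_k ∘ ·` on words: `ξ_k ∘ 1 = 0` and `ξ_k ∘ (ξ_ℓ v) = ξ_{k+ℓ} v`. -/
def circW (k : ℕ+) : List ℕ+ → DXi
  | [] => 0
  | l :: v => MonoidAlgebra.single (FreeMonoid.ofList ((k + l) :: v)) 1

/-- The ℤ-linear map `ξ_k ∘ · : 𝔡_ξ → 𝔡_ξ`. -/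
def circ (k : ℕ+) (x : DXi) : DXi :=
  Finsupp.sum x.coeff fun w a => a • circW k (FreeMonoid.toList w)

/-- The map `d` on words: `d(1) = 1` and `d(ξ_k v) = ξ_k d(v) + ξ_k ∘ d(v)`. -/
def dW : List ℕ+ → DXi
  | [] => 1
  | k :: v => xiX k * dW v + circ k (dW v)

/-- The ℤ-linear map `d : 𝔡_ξ → 𝔡_ξ`. -/
def dmap (v : DXi) : DXi := Finsupp.sum v.coeff fun w a => a • dW (FreeMonoid.toList w)

/-- The maps `φ_s` on words of 𝔡₁: `φ_0 = id`, `φ_s(1) = ξ_1 z_1^{s-1}` for `s ≥ 1`,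
`φ_s(z_1 w) = z_1 φ_s(w) + ξ_1 Σ_{i=1}^{s} z_1^i φ_{s-i}(w)`, and
`φ_s(ξ_1 w) = ξ_1 Σ_{i=0}^{s} z_1^i φ_{s-i}(w)`. -/
def phiW : ℕ → List Bool → DOne
  | s, [] =>
      if s = 0 then 1
      else MonoidAlgebra.single (FreeMonoid.ofList (true :: List.replicate (s - 1) false)) 1
  | s, false :: w =>
      zO * phiW s w +
        ∑ i ∈ Finset.Icc 1 s, xiO * zO ^ i * phiW (s - i) w
  | s, true :: w =>
      ∑ i ∈ Finset.range (s + 1), xiO * zO ^ i * phiW (s - i) w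
  termination_by _ w => w.length

/-- The ℤ-linear maps `φ_s : 𝔡₁ → 𝔡₁`. -/
def phi (s : ℕ) (x : DOne) : DOne := Finsupp.sum x.coeff fun w a => a • phiW s (FreeMonoid.toList w)

/-- `Φ_0 = id` and `Φ_ℓ = Σ_{r=1}^{ℓ} (-1)^r Σ_{c ∈ I(r,ℓ)} φ_{c_1} ⋯ φ_{c_r}` for `ℓ ≥ 1`. -/
def PhiM : ℕ → DOne → DOne
  | 0 => id
  | l + 1 => fun x =>
      ∑ r ∈ Finset.Icc 1 (l + 1),
        (-1 : ℤ) ^ r •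
          ∑ c ∈ Ifin r (l + 1), ((List.ofFn fun j : Fin r => phi (c j)).foldr (· ∘ ·) id) x

/-- `Z_s(w) = Σ_{ℓ=0}^{s} ρ(d(ξ_1^{s-ℓ}), Φ_ℓ(w))`. -/
def Zmap (s : ℕ) (w : DOne) : Dfree :=
  ∑ l ∈ Finset.range (s + 1), rho (dmap (xiX 1 ^ (s - l))) (toD1 (PhiM l w))

/-! Both sides are ℤ-linear in `v` and in `w`, so it suffices to take words
`v = ξ_{k_1} ⋯ ξ_{k_s}` and `w = u_1 ⋯ u_r`. Summing out the outermost variable gives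
`A_{u w}(M) = Σ_{0<m<M} J_u(m) A_w(m)`. In `A_{ξ_k v}(M) · A_{u w}(M)` the two outermost
variables `m` (of `ξ_k`) and `n` (of `u`) satisfy `m > n`, `m < n` or `m = n`, and these three
regions give the three terms of the recursion for `ρ`: on the diagonal
`J_{ξ_k}(m) J_u(m) = J_{u'}(m)` with `u' = Sum.map (k + ·) (k + ·) u`, i.e. `z_ℓ ↦ z_{k+ℓ}` and
`ξ_ℓ ↦ ξ_{k+ℓ}`. Induction on the lengths of the words concludes. -/

lemma sum_Ico_mul_sum_Ico {R : Type*} [CommSemiring R] (a M : ℕ) (f g : ℕ → R) :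
    (∑ m ∈ Finset.Ico a M, f m) * ∑ n ∈ Finset.Ico a M, g n =
      ∑ m ∈ Finset.Ico a M, f m * ∑ n ∈ Finset.Ico a m, g n
        + ∑ n ∈ Finset.Ico a M, (∑ m ∈ Finset.Ico a n, f m) * g n
        + ∑ m ∈ Finset.Ico a M, f m * g m := by
  rcases lt_or_ge M a with hM | hM
  · simp [Finset.Ico_eq_empty_of_le hM.le]
  induction M, hM using Nat.le_induction with
  | base => simp
  | succ M hM ih =>
    rw [Finset.sum_Ico_succ_top hM, Finset.sum_Ico_succ_top hM, Finset.sum_Ico_succ_top hM,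
      Finset.sum_Ico_succ_top hM, Finset.sum_Ico_succ_top hM, add_mul, mul_add, mul_add, ih]
    ring

lemma sum_Ioo_mul_sum_Ioo {R : Type*} [CommSemiring R] (a M : ℕ) (f g : ℕ → R) :
    (∑ m ∈ Finset.Ioo a M, f m) * ∑ n ∈ Finset.Ioo a M, g n =
      ∑ m ∈ Finset.Ioo a M, f m * ∑ n ∈ Finset.Ioo a m, g n
        + ∑ n ∈ Finset.Ioo a M, (∑ m ∈ Finset.Ioo a n, f m) * g n
        + ∑ m ∈ Finset.Ioo a M, f m * g m := by
  simpa only [Finset.Ico_add_one_left_eq_Ioo] using sum_Ico_mul_sum_Ico (a + 1) M f g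

def decreasingTuples (n M : ℕ) : Finset (Fin n → ℕ) :=
  (Fintype.piFinset fun _ : Fin n => Finset.Ioo 0 M).filter fun m => ∀ i j, i < j → m j < m i

lemma cons_mem_decreasingTuples {n M a : ℕ} {t : Fin n → ℕ} :
    Fin.cons a t ∈ decreasingTuples (n + 1) M ↔ a ∈ Finset.Ioo 0 M ∧ t ∈ decreasingTuples n a := by
  simp only [decreasingTuples, Finset.mem_filter, Fintype.mem_piFinset, Finset.mem_Ioo,
    Fin.forall_fin_succ, Fin.cons_zero, Fin.cons_succ, Fin.succ_lt_succ_iff, Fin.succ_pos,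
    Fin.not_lt_zero, IsEmpty.forall_iff, forall_const, true_and]
  constructor
  · rintro ⟨⟨ha, ht⟩, hlt, hdec⟩
    exact ⟨ha, fun j => ⟨(ht j).1, hlt j⟩, hdec⟩
  · rintro ⟨ha, ht, hdec⟩
    exact ⟨⟨ha, fun j => ⟨(ht j).1, (ht j).2.trans ha.2⟩⟩, fun j => (ht j).2, hdec⟩

lemma sum_decreasingTuples_succ {β : Type*} [AddCommMonoid β] (n M : ℕ)
    (f : (Fin (n + 1) → ℕ) → β) :
    ∑ m ∈ decreasingTuples (n + 1) M, f m =
      ∑ a ∈ Finset.Ioo 0 M, ∑ t ∈ decreasingTuples n a, f (Fin.cons a t) := by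
  rw [Finset.sum_sigma']
  refine Finset.sum_nbij' (fun m => ⟨m 0, Fin.tail m⟩) (fun p => Fin.cons p.1 p.2) ?_ ?_ ?_ ?_ ?_
  · intro m hm
    rw [← Fin.cons_self_tail m, cons_mem_decreasingTuples] at hm
    simpa using hm
  · rintro ⟨a, t⟩ h
    simpa [cons_mem_decreasingTuples] using h
  · intro m _
    exact Fin.cons_self_tail m
  · rintro ⟨a, t⟩ _
    simp
  · intro m _
    rw [Fin.cons_self_tail]

section

variable (q : ℝ)

lemma AW_nil (M : ℕ) : AW q [] M = 1 := by
  simp [AW]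

lemma AW_cons (u : Letter) (w : List Letter) (M : ℕ) :
    AW q (u :: w) M = ∑ m ∈ Finset.Ioo 0 M, Jlet q u m * AW q w m := by
  refine (sum_decreasingTuples_succ w.length M _).trans (Finset.sum_congr rfl fun m _ => ?_)
  rw [AW, Finset.mul_sum]
  exact Finset.sum_congr rfl fun t _ => Fin.prod_univ_succ _

def AmapHom (M : ℕ) : Dfree →+ ℝ :=
  (Finsupp.liftAddHom fun w =>
    (AddMonoidHom.mulRight (AW q (FreeMonoid.toList w) M)).comp (Int.castAddHom ℝ)).comp
    MonoidAlgebra.coeffAddEquiv.toAddMonoidHom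

lemma Amap_eq_AmapHom (x : Dfree) (M : ℕ) : Amap q x M = AmapHom q M x := rfl

lemma Amap_add (x y : Dfree) (M : ℕ) : Amap q (x + y) M = Amap q x M + Amap q y M :=
  map_add (AmapHom q M) x y

lemma Amap_single (w : FreeMonoid Letter) (a : ℤ) (M : ℕ) :
    Amap q (MonoidAlgebra.single w a) M = a * AW q (FreeMonoid.toList w) M :=
  Finsupp.sum_single_index (by simp)

lemma Amap_single_of_mul (u : Letter) (x : Dfree) (M : ℕ) :
    Amap q (MonoidAlgebra.single (FreeMonoid.of u) 1 * x) M =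
      ∑ m ∈ Finset.Ioo 0 M, Jlet q u m * Amap q x m := by
  induction x using MonoidAlgebra.induction_linear with
  | zero => simp [Amap_eq_AmapHom]
  | add x y hx hy =>
    simp only [mul_add, Amap_add, hx, hy, Finset.sum_add_distrib]
  | single w a =>
    rw [MonoidAlgebra.single_mul_single, one_mul, Amap_single, FreeMonoid.toList_mul,
      FreeMonoid.toList_of, List.singleton_append, AW_cons, Finset.mul_sum]
    refine Finset.sum_congr rfl fun m _ => ?_
    rw [Amap_single]
    ring

lemma Jlet_inr_mul (k : ℕ+) (u : Letter) (m : ℕ) :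
    Jlet q (Sum.inr k) m * Jlet q u m = Jlet q (Sum.map (k + ·) (k + ·) u) m := by
  cases u with
  | inl l =>
    simp only [Jlet, Sum.map_inl, PNat.add_coe]
    rw [div_mul_div_comm, ← pow_add, ← pow_add, Nat.add_sub_assoc (l.pos : 1 ≤ (l : ℕ)), add_mul]
  | inr l =>
    simp only [Jlet, Sum.map_inr, PNat.add_coe]
    rw [div_mul_div_comm, ← pow_add, ← pow_add, add_mul]

lemma rhoW_cons_cons (k : ℕ+) (v : List ℕ+) (u : Letter) (w : List Letter) :
    rhoW (k :: v) (u :: w) =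
      MonoidAlgebra.single (FreeMonoid.of (Sum.inr k)) 1 * rhoW v (u :: w)
        + MonoidAlgebra.single (FreeMonoid.of u) 1 * rhoW (k :: v) w
        + MonoidAlgebra.single (FreeMonoid.of (Sum.map (k + ·) (k + ·) u)) 1 * rhoW v w := by
  cases u <;> rw [rhoW] <;> rfl

theorem AW_map_inr_mul_AW (v : List ℕ+) (w : List Letter) (M : ℕ) :
    AW q (v.map Sum.inr) M * AW q w M = Amap q (rhoW v w) M := by
  induction v generalizing w M with
  | nil => simp [rhoW, Amap_single, AW_nil]
  | cons k v ihv =>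
    induction w generalizing M with
    | nil => simp [rhoW, Amap_single, AW_nil]
    | cons u w ihw =>
      rw [rhoW_cons_cons, Amap_add, Amap_add, Amap_single_of_mul, Amap_single_of_mul,
        Amap_single_of_mul, List.map_cons, AW_cons, AW_cons q u, sum_Ioo_mul_sum_Ioo]
      congr 1
      congr 1
      · refine Finset.sum_congr rfl fun m _ => ?_
        rw [← AW_cons, mul_assoc, ihv]
      · refine Finset.sum_congr rfl fun n _ => ?_
        rw [← AW_cons, ← List.map_cons, mul_left_comm, ihw]
      · refine Finset.sum_congr rfl fun m _ => ?_
        rw [mul_mul_mul_comm, Jlet_inr_mul, ihv]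

lemma Amap_toD (v : DXi) (M : ℕ) :
    Amap q (toD v) M = v.coeff.sum fun a c => c * AW q ((FreeMonoid.toList a).map Sum.inr) M :=
  Finsupp.sum_mapDomain_index (by simp) (by simp [add_mul])

lemma Amap_rho (v : DXi) (w : Dfree) (M : ℕ) :
    Amap q (rho v w) M = v.coeff.sum fun a c => w.coeff.sum fun b d =>
      (c * d : ℝ) * Amap q (rhoW (FreeMonoid.toList a) (FreeMonoid.toList b)) M := by
  simp only [rho, Amap_eq_AmapHom, Finsupp.sum, map_sum, map_zsmul]
  simp only [zsmul_eq_mul, Int.cast_mul]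

end

theorem A_mul_general (q : ℝ) (v : DXi) (w : Dfree) (M : ℕ) :
    Amap q (toD v) M * Amap q w M = Amap q (rho v w) M := by
  rw [Amap_toD, Amap_rho, Finsupp.sum_mul]
  refine Finsupp.sum_congr fun a _ => ?_
  rw [Amap, Finsupp.mul_sum]
  refine Finsupp.sum_congr fun b _ => ?_
  rw [← AW_map_inr_mul_AW]
  ring

/-- For every `v ∈ 𝔡_ξ`, every `w ∈ 𝔡` and every integer `M ≥ 1`,
`A_v(M) · A_w(M) = A_{ρ(v,w)}(M)`. -/
theorem A_mul (q : ℝ) (hq0 : 0 < q) (hq1 : q < 1) (v : DXi) (w : Dfree) (M : ℕ) (hM : 1 ≤ M) :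
    Amap q (toD v) M * Amap q w M = Amap q (rho v w) M :=
  A_mul_general q v w M
end
end

section
/- Let s ≥ 1, let v be one of the letters z_1 or ξ_1, and let N > M be positive integers. Then Σ_{N>n_1>...>n_{s+1}>M} p(n_1,...,n_s; n_{s+1}) J_v(n_{s+1}) = Σ_{N>k_1>...>k_{s+1}>M} J_v(k_1) p(k_2,...,k_{s+1}; M) + Σ_{i=1}^{s} Σ_{N>k_1>...>k_{s+1}>M} (q^{k_1}/[k_1]) (Π_{j=2}^{i+1} 1/[k_j]) p(k_{i+2},...,k_{s+1}; M), where p(∅;M) := 1. -/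
open scoped BigOperators

noncomputable section

attribute [local instance 10] Classical.propDecidable

/-! Peeling off the smallest entry of the chains on the left, and the largest entry of those in the
first sum on the right, and translating, turns both into sums over `G(d) = Σ_{d > e₁ > ⋯ > e_s > 0}
(q^{e₁}/[e₁]) Π_{j ≥ 2} 1/[e_j]`: the left side is `Σ_{M<m<N} J(m) G(N-m)` and the first sum on
the right is `Σ_{M<a<N} J(a) G(a-M)`. Writing `a = m + e₁` and using
`(q^{a-m}/[a-m]) J(m) = J(a) q^{a-m}/[a-m] + (q^a/[a]) (1/[m])`, the left side becomes the first
sum on the right plus `Σ_{M<a<N} (q^a/[a]) Σ_{M<m<a} (1/[m]) H(a-m)`, where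
`H(d) = Σ_{d > e₂ > ⋯ > e_s > 0} Π 1/[e_j]`. That this inner sum is the sum over `i` on the right
follows by induction on `s` from the partial fraction `1/[x] · 1/[y] = 1/[x+y] (1/[x] + q^y/[y])`.
-/

namespace PThrough

open Finset

section QInt

variable {q : ℝ}

lemma qint_ne_zero (hq0 : 0 ≤ q) (hq1 : q < 1) {n : ℕ} (hn : n ≠ 0) : qint q n ≠ 0 :=
  div_ne_zero (sub_ne_zero.2 (pow_lt_one₀ hq0 hq1 hn).ne') (sub_ne_zero.2 hq1.ne')

lemma qint_add (hq1 : q ≠ 1) (x y : ℕ) : qint q (x + y) = qint q y + q ^ y * qint q x := by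
  have : 1 - q ≠ 0 := sub_ne_zero.2 hq1.symm
  simp only [qint, pow_add]
  field_simp
  ring

lemma one_div_qint_mul_one_div_qint (hq0 : 0 ≤ q) (hq1 : q < 1) {x y : ℕ} (hx : x ≠ 0)
    (hy : y ≠ 0) :
    1 / qint q x * (1 / qint q y) = 1 / qint q (x + y) * (1 / qint q x + q ^ y / qint q y) := by
  have hx0 := qint_ne_zero hq0 hq1 hx
  have hy0 := qint_ne_zero hq0 hq1 hy
  have hxy0 := qint_ne_zero hq0 hq1 (n := x + y) (by omega)
  field_simp
  linear_combination qint_add hq1.ne x y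

lemma pow_div_qint_mul_J (hq0 : 0 ≤ q) (hq1 : q < 1) {J : ℕ → ℝ}
    (hJ : J = (fun m => 1 / qint q m) ∨ J = (fun m => q ^ m / qint q m)) {m n : ℕ}
    (hm : m ≠ 0) (hmn : m < n) :
    q ^ (n - m) / qint q (n - m) * J m
      = J n * (q ^ (n - m) / qint q (n - m)) + q ^ n / qint q n * (1 / qint q m) := by
  have hpow : q ^ (n - m) * q ^ m = q ^ n := pow_sub_mul_pow q hmn.le
  rcases hJ with rfl | rfl
  · have h := one_div_qint_mul_one_div_qint hq0 hq1 (x := n - m) (by omega) hm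
    rw [Nat.sub_add_cancel hmn.le] at h
    linear_combination q ^ (n - m) * h + 1 / (qint q n * qint q m) * hpow
  · have h := one_div_qint_mul_one_div_qint hq0 hq1 (y := n - m) hm (by omega)
    rw [Nat.add_sub_cancel' hmn.le] at h
    linear_combination q ^ n * h + 1 / (qint q (n - m) * qint q m) * hpow

end QInt

section Chains

variable {β : Type*} [AddCommMonoid β]

lemma cons_mk_add_one {α : Type*} {r : ℕ} (a : α) (k : Fin r → α) {m : ℕ} (h : m + 1 < r + 1) :
    (Fin.cons a k : Fin (r + 1) → α) ⟨m + 1, h⟩ = k ⟨m, Nat.lt_of_succ_lt_succ h⟩ := rfl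

lemma sum_Ioo_reflect (f : ℕ → β) (M A : ℕ) :
    ∑ m ∈ Ioo M A, f (A - m) = ∑ e ∈ Ioo 0 (A - M), f e := by
  refine sum_nbij' (A - ·) (A - ·) ?_ ?_ ?_ ?_ (fun _ _ => rfl) <;> intro m hm <;>
    simp only [mem_Ioo] at hm ⊢ <;> omega

lemma sum_Ioo_sum_Ioo_sub (g : ℕ → ℕ → β) (M N : ℕ) :
    ∑ m ∈ Ioo M N, ∑ e ∈ Ioo 0 (N - m), g m e = ∑ a ∈ Ioo M N, ∑ m ∈ Ioo M a, g m (a - m) := by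
  rw [sum_sigma', sum_sigma']
  refine sum_nbij' (fun x => ⟨x.1 + x.2, x.1⟩) (fun x => ⟨x.2, x.1 - x.2⟩) ?_ ?_ ?_ ?_ ?_ <;>
    rintro ⟨a, b⟩ h <;>
    simp only [mem_sigma, mem_Ioo, Sigma.mk.injEq, heq_eq_eq, true_and, and_true] at h ⊢
  all_goals first | omega | congr 1; omega

def chains (r lo hi : ℕ) : Finset (Fin r → ℕ) :=
  (Fintype.piFinset fun _ : Fin r => Ioo lo hi).filter fun k => ∀ i j : Fin r, i < j → k j < k i

lemma mem_chains {r lo hi : ℕ} {k : Fin r → ℕ} :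
    k ∈ chains r lo hi ↔ (∀ j, lo < k j ∧ k j < hi) ∧ ∀ i j : Fin r, i < j → k j < k i := by
  simp [chains]

lemma cons_mem_chains {r lo hi a : ℕ} {k : Fin r → ℕ} :
    (Fin.cons a k : Fin (r + 1) → ℕ) ∈ chains (r + 1) lo hi ↔
      a ∈ Ioo lo hi ∧ k ∈ chains r lo a := by
  simp only [mem_chains, Fin.forall_fin_succ, Fin.cons_zero, Fin.cons_succ, mem_Ioo,
    Fin.succ_lt_succ_iff, Fin.succ_pos, Fin.not_lt_zero, false_imp_iff]
  grind

lemma snoc_mem_chains {r lo hi m : ℕ} {k : Fin r → ℕ} :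
    (Fin.snoc k m : Fin (r + 1) → ℕ) ∈ chains (r + 1) lo hi ↔
      m ∈ Ioo lo hi ∧ k ∈ chains r m hi := by
  simp only [mem_chains, Fin.forall_fin_succ', Fin.snoc_castSucc, Fin.snoc_last, mem_Ioo,
    Fin.castSucc_lt_castSucc_iff, Fin.castSucc_lt_last, lt_irrefl]
  grind

lemma sum_chains_succ {r lo hi : ℕ} (F : (Fin (r + 1) → ℕ) → β) :
    ∑ k ∈ chains (r + 1) lo hi, F k = ∑ a ∈ Ioo lo hi, ∑ k ∈ chains r lo a, F (Fin.cons a k) := by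
  rw [sum_sigma']
  symm
  refine sum_nbij' (fun x => Fin.cons x.1 x.2) (fun k => ⟨k 0, Fin.tail k⟩) ?_ ?_ ?_ ?_
    fun _ _ => rfl
  · rintro ⟨a, k⟩ h
    exact cons_mem_chains.2 (mem_sigma.1 h)
  · intro k hk
    rw [← Fin.cons_self_tail k, cons_mem_chains] at hk
    exact mem_sigma.2 hk
  · rintro ⟨a, k⟩ _
    simp
  · intro k _
    exact Fin.cons_self_tail k

lemma sum_chains_succ' {r lo hi : ℕ} (F : (Fin (r + 1) → ℕ) → β) :
    ∑ k ∈ chains (r + 1) lo hi, F k = ∑ m ∈ Ioo lo hi, ∑ k ∈ chains r m hi, F (Fin.snoc k m) := by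
  rw [sum_sigma']
  symm
  refine sum_nbij' (fun x => Fin.snoc x.2 x.1) (fun k => ⟨k (Fin.last r), Fin.init k⟩) ?_ ?_ ?_
    ?_ fun _ _ => rfl
  · rintro ⟨m, k⟩ h
    exact snoc_mem_chains.2 (mem_sigma.1 h)
  · intro k hk
    rw [← Fin.snoc_init_self k, snoc_mem_chains] at hk
    exact mem_sigma.2 hk
  · rintro ⟨m, k⟩ _
    simp
  · intro k _
    exact Fin.snoc_init_self k

end Chains

section NestedSum

variable {R : Type*} [CommSemiring R]

/-- `nestedSum [f₁, …, f_r] lo hi = Σ_{hi > u₁ > ⋯ > u_r > lo} f₁ u₁ ⋯ f_r u_r`. -/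
def nestedSum : List (ℕ → R) → ℕ → ℕ → R
  | [], _, _ => 1
  | f :: fs, lo, hi => ∑ u ∈ Ioo lo hi, f u * nestedSum fs lo u

lemma sum_chains_prod {r : ℕ} (f : Fin r → ℕ → R) (lo hi : ℕ) :
    ∑ k ∈ chains r lo hi, ∏ j, f j (k j) = nestedSum (List.ofFn f) lo hi := by
  induction r generalizing hi with
  | zero => simp [nestedSum, chains]
  | succ r ih =>
    simp only [sum_chains_succ, Fin.prod_univ_succ, Fin.cons_zero, Fin.cons_succ, List.ofFn_succ,
      nestedSum, ← ih, mul_sum]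

lemma sum_chains_prod_append {n a b : ℕ} (h : a + b = n) (f : Fin a → ℕ → R)
    (g : Fin b → ℕ → R) (lo hi : ℕ) :
    ∑ k ∈ chains n lo hi,
        (∏ j : Fin a, f j (k ⟨j, by omega⟩)) * ∏ j : Fin b, g j (k ⟨a + j, by omega⟩)
      = nestedSum (List.ofFn f ++ List.ofFn g) lo hi := by
  subst h
  rw [← List.ofFn_fin_append, ← sum_chains_prod]
  refine sum_congr rfl fun k _ => ?_
  rw [Fin.prod_univ_add]
  simp only [Fin.append_left, Fin.append_right]
  rfl

lemma nestedSum_map_sub (fs : List (ℕ → R)) (lo hi c : ℕ) :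
    nestedSum (fs.map fun f u => f (u - c)) (lo + c) (hi + c) = nestedSum fs lo hi := by
  induction fs generalizing hi with
  | nil => rfl
  | cons f fs ih =>
    simp only [List.map_cons, nestedSum, ← map_add_right_Ioo, sum_map, addRightEmbedding_apply,
      Nat.add_sub_cancel, ih]

lemma nestedSum_map_sub_self (fs : List (ℕ → R)) {c hi : ℕ} (hc : c ≤ hi) :
    nestedSum (fs.map fun f u => f (u - c)) c hi = nestedSum fs 0 (hi - c) := by
  obtain ⟨d, rfl⟩ : ∃ d, hi = d + c := ⟨hi - c, by omega⟩
  rw [Nat.add_sub_cancel, ← nestedSum_map_sub _ 0 d c, zero_add]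

end NestedSum

/-- The factors of `p(n₁, …, n_s; 0)` as functions of `n₁, …, n_s`. -/
def pFactors (q : ℝ) (s : ℕ) : List (ℕ → ℝ) :=
  List.ofFn fun j : Fin s => fun d => (if (j : ℕ) = 0 then q ^ d else 1) / qint q d

lemma pFactors_succ (q : ℝ) (r : ℕ) :
    pFactors q (r + 1) =
      (fun d => q ^ d / qint q d) :: List.replicate r fun d => 1 / qint q d := by
  simp [pFactors, List.ofFn_succ, Fin.succ_ne_zero, ← List.ofFn_const]

variable {q : ℝ}

lemma sum_chains_pS (s lo hi c : ℕ) :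
    ∑ k ∈ chains s lo hi, pS q k c =
      nestedSum ((pFactors q s).map fun f u => f (u - c)) lo hi := by
  rw [pFactors, List.map_ofFn]
  exact sum_chains_prod (fun j d => (if (j : ℕ) = 0 then q ^ (d - c) else 1) / qint q (d - c)) lo hi

lemma sum_chains_pS_self {s c hi : ℕ} (hc : c ≤ hi) :
    ∑ k ∈ chains s c hi, pS q k c = nestedSum (pFactors q s) 0 (hi - c) := by
  rw [sum_chains_pS, nestedSum_map_sub_self _ hc]

lemma sum_range_nestedSum_pFactors (hq0 : 0 ≤ q) (hq1 : q < 1) (M r A : ℕ) :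
    ∑ i ∈ range (r + 1), nestedSum (List.replicate (i + 1) (fun d => 1 / qint q d) ++
        (pFactors q (r - i)).map fun f u => f (u - M)) M A
      = ∑ m ∈ Ioo M A,
          1 / qint q m * nestedSum (List.replicate r fun d => 1 / qint q d) 0 (A - m) := by
  induction r generalizing A with
  | zero => simp [nestedSum, pFactors]
  | succ r ih =>
    set H := nestedSum (List.replicate r fun d => 1 / qint q d) 0
    calc _ = ∑ a ∈ Ioo M A, 1 / qint q a *
            (nestedSum ((pFactors q (r + 1)).map fun f u => f (u - M)) M a
              + ∑ i ∈ range (r + 1), nestedSum (List.replicate (i + 1) (fun d => 1 / qint q d) ++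
                (pFactors q (r - i)).map fun f u => f (u - M)) M a) := by
          rw [sum_range_succ', add_comm]
          simp only [List.replicate_succ, List.cons_append, nestedSum, Nat.add_sub_add_right,
            List.replicate_zero, List.nil_append, Nat.sub_zero, mul_add, sum_add_distrib, mul_sum]
          rw [sum_comm]
      _ = ∑ a ∈ Ioo M A, 1 / qint q a *
            (∑ m ∈ Ioo M a, q ^ (a - m) / qint q (a - m) * H (a - m)
              + ∑ m ∈ Ioo M a, 1 / qint q m * H (a - m)) := by
          refine sum_congr rfl fun a ha => ?_
          rw [ih, nestedSum_map_sub_self _ (mem_Ioo.1 ha).1.le, pFactors_succ, nestedSum,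
            ← sum_Ioo_reflect (fun e => q ^ e / qint q e * H e)]
      _ = ∑ a ∈ Ioo M A, ∑ m ∈ Ioo M a, 1 / qint q m * (1 / qint q (a - m) * H (a - m)) := by
          refine sum_congr rfl fun a ha => ?_
          rw [← sum_add_distrib, mul_sum]
          refine sum_congr rfl fun m hm => ?_
          rw [mem_Ioo] at ha hm
          have h := one_div_qint_mul_one_div_qint hq0 hq1 (x := m) (y := a - m) (by omega)
            (by omega)
          rw [Nat.add_sub_cancel' hm.2.le] at h
          linear_combination -H (a - m) * h
      _ = ∑ m ∈ Ioo M A, ∑ d ∈ Ioo 0 (A - m), 1 / qint q m * (1 / qint q d * H d) :=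
          (sum_Ioo_sum_Ioo_sub (fun m d => 1 / qint q m * (1 / qint q d * H d)) M A).symm
      _ = _ := by simp only [List.replicate_succ, nestedSum, H, mul_sum]

lemma sum_J_mul_nestedSum_pFactors (hq0 : 0 ≤ q) (hq1 : q < 1) {J : ℕ → ℝ}
    (hJ : J = (fun m => 1 / qint q m) ∨ J = (fun m => q ^ m / qint q m)) (s M N : ℕ) :
    ∑ m ∈ Ioo M N, J m * nestedSum (pFactors q s) 0 (N - m)
      = ∑ a ∈ Ioo M N, J a * nestedSum (pFactors q s) 0 (a - M)
        + ∑ a ∈ Ioo M N, q ^ a / qint q a * ∑ i ∈ range s,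
            nestedSum (List.replicate (i + 1) (fun d => 1 / qint q d) ++
              (pFactors q (s - i - 1)).map fun f u => f (u - M)) M a := by
  rcases s with _ | r
  · simp [pFactors, nestedSum]
  set H := nestedSum (List.replicate r fun d => 1 / qint q d) 0
  calc _ = ∑ a ∈ Ioo M N, ∑ m ∈ Ioo M a, J m * (q ^ (a - m) / qint q (a - m) * H (a - m)) := by
        simp only [pFactors_succ, nestedSum, mul_sum]
        exact sum_Ioo_sum_Ioo_sub _ M N
    _ = ∑ a ∈ Ioo M N, ∑ m ∈ Ioo M a, (J a * (q ^ (a - m) / qint q (a - m) * H (a - m))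
          + q ^ a / qint q a * (1 / qint q m * H (a - m))) := by
        refine sum_congr rfl fun a _ => sum_congr rfl fun m hm => ?_
        rw [mem_Ioo] at hm
        linear_combination H (a - m) * pow_div_qint_mul_J hq0 hq1 hJ (by omega : m ≠ 0) hm.2
    _ = _ := by
        have hidx (i : ℕ) : r + 1 - i - 1 = r - i := by omega
        simp only [hidx, sum_range_nestedSum_pFactors hq0 hq1, sum_add_distrib, ← mul_sum,
          sum_Ioo_reflect (fun e => q ^ e / qint q e * H e), pFactors_succ, nestedSum, H]

lemma sum_chains_pS_mul_J (J : ℕ → ℝ) (s M N : ℕ) :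
    ∑ n ∈ chains (s + 1) M N,
        pS q (fun j : Fin s => n j.castSucc) (n (Fin.last s)) * J (n (Fin.last s))
      = ∑ m ∈ Ioo M N, J m * nestedSum (pFactors q s) 0 (N - m) := by
  rw [sum_chains_succ']
  refine sum_congr rfl fun m hm => ?_
  simp only [Fin.snoc_castSucc, Fin.snoc_last]
  rw [← sum_mul, sum_chains_pS_self (mem_Ioo.1 hm).2.le, mul_comm]

lemma sum_chains_J_mul_pS (J : ℕ → ℝ) (s M N : ℕ) :
    ∑ k ∈ chains (s + 1) M N, J (k 0) * pS q (fun j : Fin s => k j.succ) M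
      = ∑ a ∈ Ioo M N, J a * nestedSum (pFactors q s) 0 (a - M) := by
  rw [sum_chains_succ]
  refine sum_congr rfl fun a ha => ?_
  simp only [Fin.cons_zero, Fin.cons_succ]
  rw [← mul_sum, sum_chains_pS_self (mem_Ioo.1 ha).1.le]

lemma sum_chains_pow_div_qint_mul_prod_mul_pS {s i : ℕ} (hi : i < s) (M N : ℕ) :
    ∑ k ∈ chains (s + 1) M N, q ^ k 0 / qint q (k 0) *
        (∏ j : Fin (i + 1), 1 / qint q (k ⟨(j : ℕ) + 1, by omega⟩)) *
        pS q (fun j : Fin (s - i - 1) => k ⟨i + 2 + (j : ℕ), by omega⟩) M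
      = ∑ a ∈ Ioo M N, q ^ a / qint q a *
          nestedSum (List.replicate (i + 1) (fun d => 1 / qint q d) ++
            (pFactors q (s - i - 1)).map fun f u => f (u - M)) M a := by
  rw [sum_chains_succ]
  refine sum_congr rfl fun a _ => ?_
  rw [← List.ofFn_const, pFactors, List.map_ofFn,
    ← sum_chains_prod_append (n := s) (a := i + 1) (b := s - i - 1) (by omega), mul_sum]
  refine sum_congr rfl fun k _ => ?_
  have hidx (j : ℕ) : i + 2 + j = i + 1 + j + 1 := by omega
  simp only [hidx, cons_mk_add_one, Fin.cons_zero, mul_assoc]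
  rfl

end PThrough

open PThrough Finset in
/-- Let `s ≥ 1`, let `J_v` be one of `m ↦ 1/[m]` (i.e. `v = z_1`) or `m ↦ q^m/[m]`
(i.e. `v = ξ_1`), and let `N > M` be positive integers.  Then
`Σ_{N>n_1>...>n_{s+1}>M} p(n_1,...,n_s;n_{s+1}) J_v(n_{s+1})
  = Σ_{N>k_1>...>k_{s+1}>M} J_v(k_1) p(k_2,...,k_{s+1};M)
  + Σ_{i=1}^{s} Σ_{N>k_1>...>k_{s+1}>M} (q^{k_1}/[k_1]) (Π_{j=2}^{i+1} 1/[k_j])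
      p(k_{i+2},...,k_{s+1};M)`,
where `p(∅;M) = 1`.  (Here the summation index `i : Fin s` stands for the value `i+1 ∈ {1,...,s}`.) -/
theorem p_through (q : ℝ) (hq0 : 0 < q) (hq1 : q < 1) (s : ℕ)
    (Jv : ℕ → ℝ)
    (hJv : Jv = (fun m => 1 / qint q m) ∨ Jv = (fun m => q ^ m / qint q m))
    (N M : ℕ) :
    (∑ n ∈ (Fintype.piFinset fun _ : Fin (s + 1) => Finset.Ioo M N).filter
        (fun n => ∀ i j : Fin (s + 1), i < j → n j < n i),
      pS q (fun j : Fin s => n j.castSucc) (n (Fin.last s)) * Jv (n (Fin.last s))) =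
    (∑ k ∈ (Fintype.piFinset fun _ : Fin (s + 1) => Finset.Ioo M N).filter
        (fun k => ∀ i j : Fin (s + 1), i < j → k j < k i),
      Jv (k 0) * pS q (fun j : Fin s => k j.succ) M) +
    ∑ i : Fin s,
      ∑ k ∈ (Fintype.piFinset fun _ : Fin (s + 1) => Finset.Ioo M N).filter
          (fun k => ∀ i' j : Fin (s + 1), i' < j → k j < k i'),
        q ^ k 0 / qint q (k 0) *
          (∏ j : Fin ((i : ℕ) + 1), 1 / qint q (k ⟨(j : ℕ) + 1, by omega⟩)) *
          pS q (fun j : Fin (s - (i : ℕ) - 1) => k ⟨(i : ℕ) + 2 + (j : ℕ), by omega⟩) M := by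
  have hchains : (Fintype.piFinset fun _ : Fin (s + 1) => Ioo M N).filter
      (fun k => ∀ i j : Fin (s + 1), i < j → k j < k i) = chains (s + 1) M N := rfl
  rw [hchains, sum_chains_pS_mul_J, sum_chains_J_mul_pS,
    sum_J_mul_nestedSum_pFactors hq0.le hq1 hJv, add_right_inj,
    sum_congr rfl fun (i : Fin s) _ => sum_chains_pow_div_qint_mul_prod_mul_pS i.isLt M N,
    sum_comm]
  refine sum_congr rfl fun a _ => ?_
  rw [mul_sum, ← Fin.sum_univ_eq_sum_range]

end
end

section
/- For every integer k ≥ 1, one has d(ξ_1^k) = Σ_{r=1}^{k} Σ_{c∈I(r,k)} ξ_{c_1}···ξ_{c_r}, where the inner sum is over all multi-indices c = (c_1,...,c_r) of positive integers with c_1+...+c_r = k. -/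
open scoped BigOperators

noncomputable section

attribute [local instance 10] Classical.propDecidable

/-! Splitting off the first part of a composition gives `F k = ∑_{a=1}^{k} ξ_a F (k - a)` for the
sum `F k` of the words `ξ_{c_1} ⋯ ξ_{c_r}` over all compositions `c` of `k`. Since `ξ_1 ∘ ·` raises
the first index of a word by one, this turns into `F (k + 1) = ξ_1 F k + ξ_1 ∘ F k`, which is also the
recursion satisfied by `d(ξ_1^k)`; both start from `1` at `k = 0`. -/

open Finset

lemma circ_add (k : ℕ+) (x y : DXi) : circ k (x + y) = circ k x + circ k y :=
  Finsupp.sum_add_index' (fun _ => zero_smul _ _) fun _ _ _ => add_smul _ _ _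

lemma circ_sum {ι : Type*} (k : ℕ+) (s : Finset ι) (f : ι → DXi) :
    circ k (∑ i ∈ s, f i) = ∑ i ∈ s, circ k (f i) :=
  map_sum (AddMonoidHom.mk' (circ k) (circ_add k)) f s

lemma circ_single (k : ℕ+) (w : FreeMonoid ℕ+) (n : ℤ) :
    circ k (MonoidAlgebra.single w n) = n • circW k w.toList :=
  Finsupp.sum_single_index (zero_smul _ _)

lemma circ_one (k : ℕ+) : circ k 1 = 0 :=
  (circ_single k 1 1).trans (smul_zero _)

lemma circ_xiX_mul (k a : ℕ+) (x : DXi) : circ k (xiX a * x) = xiX (k + a) * x := by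
  induction x using MonoidAlgebra.induction_linear with
  | zero => simp [circ]
  | add x y hx hy => rw [mul_add, circ_add, hx, hy, mul_add]
  | single w n =>
    rw [xiX, MonoidAlgebra.single_mul_single, one_mul, circ_single, xiX,
      MonoidAlgebra.single_mul_single, one_mul]
    simp [circW, FreeMonoid.toList_mul]

lemma xiOf_of_pos {a : ℕ} (ha : 0 < a) : xiOf a = xiX (a.toPNat ha) := dif_pos ha

lemma circ_one_xiOf_mul {a : ℕ} (ha : 0 < a) (x : DXi) :
    circ 1 (xiOf a * x) = xiOf (a + 1) * x := by
  rw [xiOf_of_pos ha, circ_xiX_mul, xiOf_of_pos a.succ_pos]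
  congr 2
  exact PNat.eq (add_comm 1 a)

lemma dmap_single (w : FreeMonoid ℕ+) (n : ℤ) :
    dmap (MonoidAlgebra.single w n) = n • dW w.toList :=
  Finsupp.sum_single_index (zero_smul _ _)

lemma xiX_one_pow (k : ℕ) :
    xiX 1 ^ k = MonoidAlgebra.single (FreeMonoid.ofList (List.replicate k 1)) 1 := by
  induction k with
  | zero => rfl
  | succ k ih => rw [pow_succ', ih, xiX, MonoidAlgebra.single_mul_single, one_mul]; rfl

lemma mem_Ifin {r k : ℕ} {c : Fin r → ℕ} :
    c ∈ Ifin r k ↔ (∀ j, 1 ≤ c j ∧ c j ≤ k) ∧ ∑ j, c j = k := by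
  simp [Ifin]

lemma Ifin_zero_eq_empty {k : ℕ} (hk : k ≠ 0) : Ifin 0 k = ∅ := by
  simp [Ifin, Ne.symm hk]

def compositions (k : ℕ) : Finset (List ℕ) :=
  ((range (k + 1)).sigma (Ifin · k)).image fun p => List.ofFn p.2

lemma mem_compositions {k : ℕ} {l : List ℕ} :
    l ∈ compositions k ↔ (∀ a ∈ l, 0 < a) ∧ l.sum = k := by
  simp only [compositions, mem_image, mem_sigma, mem_range, mem_Ifin, Sigma.exists]
  constructor
  · rintro ⟨r, c, ⟨-, hc, rfl⟩, rfl⟩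
    simp only [List.mem_ofFn, List.sum_ofFn, forall_exists_index, forall_apply_eq_imp_iff]
    exact ⟨fun j => (hc j).1, trivial⟩
  · rintro ⟨hpos, rfl⟩
    have hget : ∀ j, l.get j ∈ l := List.get_mem l
    refine ⟨l.length, l.get, ⟨Nat.lt_succ_of_le (List.length_le_sum_of_one_le _ hpos),
      fun j => ⟨hpos _ (hget j), List.le_sum_of_mem (hget j)⟩, ?_⟩, List.ofFn_get l⟩
    rw [← List.sum_ofFn, List.ofFn_get]

lemma compositions_zero : compositions 0 = {[]} := by
  ext l
  cases l <;> simp [mem_compositions]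
  omega

lemma compositions_eq_biUnion {k : ℕ} (hk : 0 < k) :
    compositions k = (Icc 1 k).biUnion fun a => (compositions (k - a)).image (a :: ·) := by
  ext l
  cases l with
  | nil => simp [mem_compositions]; omega
  | cons a t =>
    simp only [mem_compositions, List.mem_cons, forall_eq_or_imp, List.sum_cons, mem_biUnion,
      mem_Icc, mem_image, List.cons.injEq, exists_eq_right_right]
    constructor
    · rintro ⟨⟨ha, ht⟩, hsum⟩
      refine ⟨⟨ha, ?_⟩, ht, ?_⟩ <;> omega
    · rintro ⟨⟨ha, hak⟩, ht, hsum⟩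
      exact ⟨⟨ha, ht⟩, by omega⟩

def xiWord (l : List ℕ) : DXi := (l.map xiOf).prod

def compositionSum (k : ℕ) : DXi := ∑ l ∈ compositions k, xiWord l

lemma compositionSum_zero : compositionSum 0 = 1 := by
  simp [compositionSum, compositions_zero, xiWord]

lemma compositionSum_eq_sum_mul {k : ℕ} (hk : 0 < k) :
    compositionSum k = ∑ a ∈ Icc 1 k, xiOf a * compositionSum (k - a) := by
  rw [compositionSum, compositions_eq_biUnion hk, sum_biUnion]
  · refine sum_congr rfl fun a _ => ?_
    rw [sum_image fun _ _ _ _ h => List.cons_injective h, compositionSum, mul_sum]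
    exact sum_congr rfl fun l _ => List.prod_cons
  · intro a _ b _ hab
    simp only [Function.onFun, disjoint_left, mem_image]
    rintro _ ⟨s, -, rfl⟩ ⟨t, -, h⟩
    exact hab (List.cons.inj h).1.symm

lemma sum_Icc_one_succ {M : Type*} [AddCommMonoid M] (k : ℕ) (f : ℕ → M) :
    ∑ a ∈ Icc 1 (k + 1), f a = f 1 + ∑ a ∈ Icc 1 k, f (a + 1) := by
  rw [Icc_eq_cons_Ioc (by omega), sum_cons, ← Icc_add_one_left_eq_Ioc, ← map_add_right_Icc,
    sum_map]
  rfl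

lemma compositionSum_succ (k : ℕ) :
    compositionSum (k + 1) = xiX 1 * compositionSum k + circ 1 (compositionSum k) := by
  rw [compositionSum_eq_sum_mul k.add_one_pos, sum_Icc_one_succ, xiOf_of_pos one_pos,
    Nat.add_sub_cancel]
  congr 1
  rcases k.eq_zero_or_pos with rfl | hk
  · simp [compositionSum_zero, circ_one]
  · rw [compositionSum_eq_sum_mul hk, circ_sum]
    refine sum_congr rfl fun a ha => ?_
    rw [circ_one_xiOf_mul (mem_Icc.mp ha).1, Nat.add_sub_add_right]

lemma dW_replicate_one (k : ℕ) : dW (List.replicate k 1) = compositionSum k := by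
  induction k with
  | zero => exact compositionSum_zero.symm
  | succ k ih => rw [List.replicate_succ, dW, ih, compositionSum_succ]

lemma dmap_xiX_one_pow (k : ℕ) : dmap (xiX 1 ^ k) = compositionSum k := by
  rw [xiX_one_pow, dmap_single, one_smul, FreeMonoid.toList_ofList, dW_replicate_one]

lemma compositionSum_eq_sum_Ifin {k : ℕ} (hk : 1 ≤ k) :
    compositionSum k =
      ∑ r ∈ Icc 1 k, ∑ c ∈ Ifin r k, (List.ofFn fun j : Fin r => xiOf (c j)).prod := by
  have hinj : Set.InjOn (fun p : (Σ r, Fin r → ℕ) => List.ofFn p.2)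
      ↑((range (k + 1)).sigma (Ifin · k)) :=
    fun p _ q _ h => List.ofFn_inj'.mp h
  rw [compositionSum, compositions, sum_image hinj, sum_sigma]
  simp only [xiWord, List.map_ofFn, Function.comp_def]
  symm
  refine sum_subset (fun r hr => by simp at hr ⊢; omega) fun r hr hr' => ?_
  obtain rfl : r = 0 := by simp at hr hr'; omega
  rw [Ifin_zero_eq_empty (by omega), sum_empty]

/-- For every integer `k ≥ 1`, `d(ξ_1^k) = Σ_{r=1}^{k} Σ_{c ∈ I(r,k)} ξ_{c_1} ⋯ ξ_{c_r}`. -/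
theorem d_xi_pow (k : ℕ) (hk : 1 ≤ k) :
    dmap (xiX 1 ^ k) =
      ∑ r ∈ Finset.Icc 1 k, ∑ c ∈ Ifin r k, (List.ofFn fun j : Fin r => xiOf (c j)).prod :=
  (dmap_xiX_one_pow k).trans (compositionSum_eq_sum_Ifin hk)

end
end

section
/- For every integer ℓ ≥ 0, one has Φ_ℓ(1) = (−ξ_1)^ℓ. -/
open scoped BigOperators

noncomputable section

attribute [local instance 10] Classical.propDecidable

/-!
Splitting off the first part of a composition gives `Φ_ℓ = -Σ_{s=1}^{ℓ} φ_s ∘ Φ_{ℓ-s}`,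
i.e. `Σ_{s=0}^{ℓ} φ_s Φ_{ℓ-s} = 0` for `ℓ ≥ 1`. By induction on `ℓ` it therefore suffices
that `T_n = Σ_{s=0}^{n} φ_s((-ξ₁)^{n-s})` (`phiConvNegXiO n`) vanishes for `n ≥ 1`.
The rule for `φ_s(ξ₁ w)` gives `T_{n+1} = ξ₁ z₁^n - Σ_{i=0}^{n} ξ₁ z₁^i T_{n-i}`, and by
induction only the term `i = n`, with `T_0 = 1`, survives to cancel `ξ₁ z₁^n`.
In generating series: `φ(t)((1 + ξ₁ t)⁻¹) = 1`.
-/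

open Finset

lemma Ifin_zero_left_of_ne_zero {n : ℕ} (hn : n ≠ 0) : Ifin 0 n = ∅ := by
  ext c
  simp [Ifin, Ne.symm hn]

lemma Ifin_eq_empty_of_lt {r n : ℕ} (h : n < r) : Ifin r n = ∅ := by
  ext c
  simp only [Ifin, mem_filter, Fintype.mem_piFinset, mem_Icc,
    notMem_empty, iff_false, not_and]
  intro hc hsum
  have : r ≤ ∑ i, c i := by
    simpa using card_nsmul_le_sum univ c 1 fun i _ => (hc i).1
  omega

lemma Ifin_zero_zero : Ifin 0 0 = univ := by
  ext c
  simp [Ifin]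

lemma cons_mem_Ifin_succ {r n s : ℕ} {c : Fin r → ℕ} :
    (Fin.cons s c : Fin (r + 1) → ℕ) ∈ Ifin (r + 1) n ↔
      s ∈ Icc 1 n ∧ c ∈ Ifin r (n - s) := by
  simp only [Ifin, mem_filter, Fintype.mem_piFinset, mem_Icc, Fin.forall_fin_succ,
    Fin.cons_zero, Fin.cons_succ, Fin.sum_cons]
  have hle (i : Fin r) : c i ≤ ∑ j, c j := single_le_sum (by simp) (mem_univ i)
  constructor
  · rintro ⟨⟨hs, hc⟩, hsum⟩
    exact ⟨hs, fun i => ⟨(hc i).1, by have := hle i; omega⟩, by omega⟩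
  · rintro ⟨hs, hc, hsum⟩
    exact ⟨⟨hs, fun i => ⟨(hc i).1, by have := (hc i).2; omega⟩⟩, by omega⟩

lemma sum_Ifin_succ {M : Type*} [AddCommMonoid M] (r n : ℕ) (G : (Fin (r + 1) → ℕ) → M) :
    ∑ c ∈ Ifin (r + 1) n, G c =
      ∑ s ∈ Icc 1 n, ∑ c ∈ Ifin r (n - s), G (Fin.cons s c) := by
  rw [sum_sigma']
  refine sum_nbij' (fun c => ⟨c 0, Fin.tail c⟩) (fun p => Fin.cons p.1 p.2)
    (fun c hc => ?_) (fun p hp => cons_mem_Ifin_succ.2 (mem_sigma.1 hp))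
    (fun c _ => Fin.cons_self_tail c) (fun p _ => by simp) (fun c _ => by rw [Fin.cons_self_tail])
  rw [← Fin.cons_self_tail c, cons_mem_Ifin_succ] at hc
  exact mem_sigma.2 hc

def phiLinear (s : ℕ) : DOne →ₗ[ℤ] DOne :=
  Finsupp.lift DOne ℤ (FreeMonoid Bool) (fun w => phiW s w.toList) ∘ₗ
    (MonoidAlgebra.coeffLinearEquiv ℤ).toLinearMap

lemma phiLinear_apply (s : ℕ) (x : DOne) : phiLinear s x = phi s x := rfl

lemma phi_single (s : ℕ) (w : FreeMonoid Bool) (a : ℤ) :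
    phi s (MonoidAlgebra.single w a) = a • phiW s w.toList := by
  rw [phi, MonoidAlgebra.coeff_single, Finsupp.sum_single_index (by simp)]

lemma phi_neg (s : ℕ) (x : DOne) : phi s (-x) = -phi s x := by
  simp only [← phiLinear_apply, map_neg]

def phiComp {r : ℕ} (c : Fin r → ℕ) : DOne → DOne :=
  (List.ofFn fun j : Fin r => phi (c j)).foldr (· ∘ ·) id

lemma phiComp_cons {r : ℕ} (s : ℕ) (c : Fin r → ℕ) :
    phiComp (Fin.cons s c : Fin (r + 1) → ℕ) = phi s ∘ phiComp c := by
  simp [phiComp, List.ofFn_succ]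

lemma PhiM_eq_sum_range {n N : ℕ} (h : n < N) (x : DOne) :
    PhiM n x = ∑ r ∈ range N, (-1 : ℤ) ^ r • ∑ c ∈ Ifin r n, phiComp c x := by
  rcases n with _ | m
  · rw [sum_eq_single_of_mem 0 (by simpa using h)]
    · simp [PhiM, Ifin_zero_zero, phiComp]
    · intro r _ hr
      simp [Ifin_eq_empty_of_lt (Nat.pos_of_ne_zero hr)]
  · refine sum_subset (fun r hr => ?_) (fun r _ hr => ?_)
    · simp only [mem_Icc, mem_range] at hr ⊢
      omega
    · rcases Nat.eq_zero_or_pos r with rfl | hpos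
      · simp [Ifin_zero_left_of_ne_zero]
      · have : m + 1 < r := by simp only [mem_Icc] at hr; omega
        simp [Ifin_eq_empty_of_lt this]

lemma PhiM_succ (l : ℕ) (x : DOne) :
    PhiM (l + 1) x = -∑ s ∈ Icc 1 (l + 1), phi s (PhiM (l + 1 - s) x) := by
  calc PhiM (l + 1) x
      = ∑ r ∈ range (l + 1),
          (-1 : ℤ) ^ (r + 1) • ∑ c ∈ Ifin (r + 1) (l + 1), phiComp c x := by
        rw [PhiM_eq_sum_range (Nat.lt_succ_self _), sum_range_succ',
          Ifin_zero_left_of_ne_zero (Nat.succ_ne_zero l), sum_empty, smul_zero, add_zero]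
    _ = ∑ r ∈ range (l + 1), ∑ s ∈ Icc 1 (l + 1),
          -phi s ((-1 : ℤ) ^ r • ∑ c ∈ Ifin r (l + 1 - s), phiComp c x) := by
        refine sum_congr rfl fun r _ => ?_
        rw [sum_Ifin_succ, smul_sum]
        refine sum_congr rfl fun s _ => ?_
        simp only [phiComp_cons, Function.comp_apply, ← phiLinear_apply, map_zsmul, map_sum,
          pow_succ, mul_neg_one, neg_smul]
    _ = -∑ s ∈ Icc 1 (l + 1), phi s (PhiM (l + 1 - s) x) := by
        rw [sum_comm, ← sum_neg_distrib]
        refine sum_congr rfl fun s hs => ?_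
        have hlt : l + 1 - s < l + 1 := by simp only [mem_Icc] at hs; omega
        rw [PhiM_eq_sum_range hlt, ← phiLinear_apply, map_sum, sum_neg_distrib]
        rfl

lemma zO_pow (n : ℕ) :
    zO ^ n = MonoidAlgebra.single (FreeMonoid.ofList (List.replicate n false)) 1 := by
  induction n with
  | zero => rfl
  | succ n ih =>
    rw [pow_succ', ih, zO, MonoidAlgebra.single_mul_single, one_mul]
    rfl

lemma phiW_zero (w : List Bool) : phiW 0 w = MonoidAlgebra.single (FreeMonoid.ofList w) 1 := by
  induction w with
  | nil => simp [phiW, MonoidAlgebra.one_def]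
  | cons b w ih =>
    cases b <;> simp [phiW, ih, zO, xiO, MonoidAlgebra.single_mul_single]

lemma phi_zero (x : DOne) : phi 0 x = x := by
  induction x using MonoidAlgebra.induction_linear with
  | zero => rfl
  | add x y hx hy => rw [← phiLinear_apply, map_add, phiLinear_apply, phiLinear_apply, hx, hy]
  | single w a => simp [phi_single, phiW_zero, MonoidAlgebra.smul_single]

lemma phi_succ_one (s : ℕ) : phi (s + 1) 1 = xiO * zO ^ s := by
  rw [MonoidAlgebra.one_def, phi_single, one_smul, zO_pow, xiO, MonoidAlgebra.single_mul_single,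
    one_mul]
  simp [phiW]

lemma phi_xiO_mul (s : ℕ) (x : DOne) :
    phi s (xiO * x) = ∑ i ∈ range (s + 1), xiO * zO ^ i * phi (s - i) x := by
  induction x using MonoidAlgebra.induction_linear with
  | zero => simp [← phiLinear_apply]
  | add x y hx hy =>
    simp only [mul_add, ← phiLinear_apply, map_add, sum_add_distrib] at hx hy ⊢
    rw [hx, hy]
  | single w a =>
    have hmul :
        xiO * MonoidAlgebra.single w a = MonoidAlgebra.single (FreeMonoid.of true * w) a := by
      rw [xiO, MonoidAlgebra.single_mul_single, one_mul]
    rw [hmul, phi_single, FreeMonoid.toList_mul, FreeMonoid.toList_of, List.singleton_append, phiW,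
      smul_sum]
    refine sum_congr rfl fun i _ => ?_
    rw [phi_single, mul_smul_comm]

def phiConvNegXiO (n : ℕ) : DOne :=
  ∑ s ∈ range (n + 1), phi s ((-xiO) ^ (n - s))

lemma phiConvNegXiO_zero : phiConvNegXiO 0 = 1 := by
  simp [phiConvNegXiO, phi_zero]

lemma phi_neg_xiO_pow_succ (s k : ℕ) :
    phi s ((-xiO) ^ (k + 1)) =
      -∑ i ∈ range (s + 1), xiO * zO ^ i * phi (s - i) ((-xiO) ^ k) := by
  rw [pow_succ', neg_mul, phi_neg, phi_xiO_mul]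

lemma phiConvNegXiO_succ (m : ℕ) :
    phiConvNegXiO (m + 1) =
      xiO * zO ^ m - ∑ i ∈ range (m + 1), xiO * zO ^ i * phiConvNegXiO (m - i) := by
  let f : ℕ → ℕ → DOne := fun i t => xiO * zO ^ i * phi t ((-xiO) ^ (m - i - t))
  calc phiConvNegXiO (m + 1)
      = ∑ s ∈ range (m + 1), phi s ((-xiO) ^ (m - s + 1)) + phi (m + 1) 1 := by
        rw [phiConvNegXiO, sum_range_succ, Nat.sub_self, pow_zero]
        refine congrArg (· + _) (sum_congr rfl fun s hs => ?_)
        rw [mem_range] at hs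
        rw [show m + 1 - s = m - s + 1 by omega]
    _ = xiO * zO ^ m - ∑ s ∈ range (m + 1), ∑ i ∈ range (s + 1), f i (s - i) := by
        simp only [phi_neg_xiO_pow_succ, phi_succ_one, sum_neg_distrib, f]
        rw [neg_add_eq_sub]
        refine congrArg (_ - ·) (sum_congr rfl fun s hs => sum_congr rfl fun i hi => ?_)
        rw [mem_range] at hs hi
        dsimp only
        rw [show m - i - (s - i) = m - s by omega]
    _ = xiO * zO ^ m - ∑ i ∈ range (m + 1), ∑ t ∈ range (m + 1 - i), f i t := by
        rw [sum_range_diag_flip]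
    _ = xiO * zO ^ m - ∑ i ∈ range (m + 1), xiO * zO ^ i * phiConvNegXiO (m - i) := by
        refine congrArg (_ - ·) (sum_congr rfl fun i hi => ?_)
        rw [mem_range] at hi
        rw [phiConvNegXiO, mul_sum, show m + 1 - i = m - i + 1 by omega]

lemma phiConvNegXiO_succ_eq_zero (m : ℕ) : phiConvNegXiO (m + 1) = 0 := by
  induction m using Nat.strong_induction_on with
  | _ m ih =>
    rw [phiConvNegXiO_succ, sum_eq_single_of_mem m (self_mem_range_succ m),
      Nat.sub_self, phiConvNegXiO_zero, mul_one, sub_self]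
    intro i hi hne
    rw [mem_range] at hi
    obtain ⟨k, hk⟩ : ∃ k, m - i = k + 1 := ⟨m - i - 1, by omega⟩
    rw [hk, ih k (by omega), mul_zero]

/-- For every integer `ℓ ≥ 0`, `Φ_ℓ(1) = (-ξ_1)^ℓ`. -/
theorem Phi_one (l : ℕ) : PhiM l 1 = (-xiO) ^ l := by
  induction l using Nat.strong_induction_on with
  | _ l ih =>
    rcases l with _ | m
    · rfl
    · have hconv :
          (-xiO) ^ (m + 1) + ∑ s ∈ Icc 1 (m + 1), phi s ((-xiO) ^ (m + 1 - s)) = 0 := by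
        rw [← phiConvNegXiO_succ_eq_zero m, phiConvNegXiO, range_eq_Ico,
          sum_eq_sum_Ico_succ_bot (Nat.succ_pos _), phi_zero, Nat.sub_zero,
          zero_add, Nat.succ_eq_add_one, Ico_add_one_right_eq_Icc]
      rw [PhiM_succ, eq_neg_of_add_eq_zero_left hconv]
      refine congrArg Neg.neg (sum_congr rfl fun s hs => ?_)
      rw [mem_Icc] at hs
      rw [ih (m + 1 - s) (by omega)]

end
end
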